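/- Let b ≥ 3, n = b + 1 and α ∈ [0,1). Let G⋆ be a connected K_{1,b}-minor free graph on n vertices attaining the maximum A_α-spectral radius among all connected K_{1,b}-minor free graphs on n vertices, x its Perron vector, v* a vertex of maximum coordinate, U = N_{G⋆}(v*), U_1 = {v ∈ U : d_U(v) = b − 2}, U_2 = U ∖ U_1 and W = V(G⋆) ∖ (U ∪ {v*}) (so |W| = 1). Then every vertex v ∈ U_2 satisfies d_W(v) = 1 and d_U(v) = b − 3, where d_X(v) denotes the number of neighbors of v in the set X. -/

import Mathlib

open scoped Classical


/-- `H` is a minor of `G` (branch-set / minor-model definition). -/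
def SimpleGraph.IsMinor {W V : Type*} (H : SimpleGraph W) (G : SimpleGraph V) : Prop :=
  ∃ f : W → Set V,
    (∀ w, (f w).Nonempty) ∧
    (∀ w, (G.induce (f w)).Connected) ∧
    (∀ w₁ w₂, w₁ ≠ w₂ → Disjoint (f w₁) (f w₂)) ∧
    (∀ w₁ w₂, H.Adj w₁ w₂ → ∃ v₁ ∈ f w₁, ∃ v₂ ∈ f w₂, G.Adj v₁ v₂)

/-- `G` has no `K_{a,b}`-minor. -/
def kabMinorFree (a b : ℕ) {V : Type*} (G : SimpleGraph V) : Prop :=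
  ¬ (completeBipartiteGraph (Fin a) (Fin b)).IsMinor G

/-- The `A_α`-matrix `α·D(G) + (1-α)·A(G)` of a graph. -/
noncomputable def aMatrix {V : Type*} [Fintype V] (G : SimpleGraph V) (α : ℝ) :
    Matrix V V ℝ :=
  Matrix.of fun u w =>
    (if u = w then α * ∑ z, (if G.Adj w z then (1 : ℝ) else 0) else 0)
    + (if G.Adj u w then (1 - α) else 0)

/-- The `A_α`-spectral radius: the largest eigenvalue of the `A_α`-matrix. -/
noncomputable def lambdaAlpha {V : Type*} [Fintype V] [DecidableEq V]
    (G : SimpleGraph V) (α : ℝ) : ℝ :=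
  sSup (spectrum ℝ (aMatrix G α))


/-- `τ = ⌊(b+1)/(a+1)⌋`, the number of stars of the star forest `F_{a,b}`. -/
def tauOf (a b : ℕ) : ℕ := (b + 1) / (a + 1)

/-- The star forest `F_{a,b}` on `b+1` vertices: the disjoint union of
`τ = ⌊(b+1)/(a+1)⌋` stars, `τ-1` of them isomorphic to `K_{1,a}` and one
isomorphic to `K_{1,c}` with `c = b - (a+1)(τ-1)`.  Vertex `i` belongs to the
block `min (i/(a+1)) (τ-1)`, first `τ-1` blocks of size `a+1`, whose first
vertex is the center of its star. -/
def starForest (a b : ℕ) : SimpleGraph (Fin (b + 1)) where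
  Adj i j := i ≠ j ∧
    min ((i : ℕ) / (a + 1)) (tauOf a b - 1) = min ((j : ℕ) / (a + 1)) (tauOf a b - 1) ∧
    ((i : ℕ) = min ((i : ℕ) / (a + 1)) (tauOf a b - 1) * (a + 1) ∨
     (j : ℕ) = min ((j : ℕ) / (a + 1)) (tauOf a b - 1) * (a + 1))
  symm := by
    constructor
    intro i j h
    exact ⟨h.1.symm, h.2.1.symm, h.2.2.symm⟩
  loopless := by constructor; intro i h; exact h.1 rfl

/-- `S^k(K_b)`: the complete graph `K_b` with one edge (between vertices `0`
and `1`) subdivided `k` times. -/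
def subdividedComplete (b k : ℕ) : SimpleGraph (Fin b ⊕ Fin k) where
  Adj x y :=
    match x, y with
    | Sum.inl i, Sum.inl j =>
        i ≠ j ∧ (k = 0 ∨ ¬(((i : ℕ) = 0 ∧ (j : ℕ) = 1) ∨ ((i : ℕ) = 1 ∧ (j : ℕ) = 0)))
    | Sum.inl i, Sum.inr p => ((i : ℕ) = 0 ∧ (p : ℕ) = 0) ∨ ((i : ℕ) = 1 ∧ (p : ℕ) = k - 1)
    | Sum.inr p, Sum.inl i => ((i : ℕ) = 0 ∧ (p : ℕ) = 0) ∨ ((i : ℕ) = 1 ∧ (p : ℕ) = k - 1)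
    | Sum.inr p, Sum.inr q => (p : ℕ) + 1 = (q : ℕ) ∨ (q : ℕ) + 1 = (p : ℕ)
  symm := by
    constructor
    rintro (i | p) (j | q) h
    · exact ⟨h.1.symm, by tauto⟩
    · exact h
    · exact h
    · tauto
  loopless := by
    constructor
    rintro (i | p) h
    · exact h.1 rfl
    · rcases h with h | h <;> omega

/-- The graph `F(a₁,a₂,a₃)`: a complete graph on `a₁+a₂+a₃ = b-1` vertices with
partition `V₁ ∪ V₂ ∪ V₃` (`|Vᵢ| = aᵢ`), together with a path `v₁v₂v₃` on three
new vertices, every vertex of `Vᵢ` joined to `vᵢ`. -/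
def fGraph (a₁ a₂ a₃ : ℕ) : SimpleGraph (Fin (a₁ + a₂ + a₃) ⊕ Fin 3) where
  Adj x y :=
    match x, y with
    | Sum.inl u, Sum.inl w => u ≠ w
    | Sum.inl u, Sum.inr i =>
        ((i : ℕ) = 0 ∧ (u : ℕ) < a₁) ∨
        ((i : ℕ) = 1 ∧ a₁ ≤ (u : ℕ) ∧ (u : ℕ) < a₁ + a₂) ∨
        ((i : ℕ) = 2 ∧ a₁ + a₂ ≤ (u : ℕ))
    | Sum.inr i, Sum.inl u =>
        ((i : ℕ) = 0 ∧ (u : ℕ) < a₁) ∨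
        ((i : ℕ) = 1 ∧ a₁ ≤ (u : ℕ) ∧ (u : ℕ) < a₁ + a₂) ∨
        ((i : ℕ) = 2 ∧ a₁ + a₂ ≤ (u : ℕ))
    | Sum.inr i, Sum.inr j => (i : ℕ) + 1 = (j : ℕ) ∨ (j : ℕ) + 1 = (i : ℕ)
  symm := by
    constructor
    rintro (u | i) (w | j) h
    · exact h.symm
    · exact h
    · exact h
    · tauto
  loopless := by
    constructor
    rintro (u | i) h
    · exact h rfl
    · rcases h with h | h <;> omega

/-- The Petersen graph: outer `5`-cycle, inner pentagram, five spokes. -/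
def petersen : SimpleGraph (Fin 5 ⊕ Fin 5) where
  Adj x y :=
    match x, y with
    | Sum.inl i, Sum.inl j => (j : ℕ) = ((i : ℕ) + 1) % 5 ∨ (i : ℕ) = ((j : ℕ) + 1) % 5
    | Sum.inl i, Sum.inr j => i = j
    | Sum.inr i, Sum.inl j => i = j
    | Sum.inr i, Sum.inr j => (j : ℕ) = ((i : ℕ) + 2) % 5 ∨ (i : ℕ) = ((j : ℕ) + 2) % 5
  symm := by
    constructor
    rintro (i | i) (j | j) h
    · tauto
    · exact h.symm
    · exact h.symm
    · tauto
  loopless := by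
    constructor
    rintro (i | i) h <;>
      · have hi : (i : ℕ) < 5 := i.isLt
        rcases h with h | h <;> omega

/-- The join `G ∨ H` of two graphs. -/
def joinG {V W : Type*} (G : SimpleGraph V) (H : SimpleGraph W) : SimpleGraph (V ⊕ W) where
  Adj x y :=
    match x, y with
    | Sum.inl u, Sum.inl w => G.Adj u w
    | Sum.inl _, Sum.inr _ => True
    | Sum.inr _, Sum.inl _ => True
    | Sum.inr u, Sum.inr w => H.Adj u w
  symm := by
    constructor
    rintro (u | u) (w | w) h
    · exact h.symm
    · trivial
    · trivial
    · exact h.symm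
  loopless := by
    constructor
    rintro (u | u) h
    · exact G.loopless.irrefl u h
    · exact H.loopless.irrefl u h

/-- The disjoint union of two graphs. -/
def disjUnion {V W : Type*} (G : SimpleGraph V) (H : SimpleGraph W) : SimpleGraph (V ⊕ W) where
  Adj x y :=
    match x, y with
    | Sum.inl u, Sum.inl w => G.Adj u w
    | Sum.inl _, Sum.inr _ => False
    | Sum.inr _, Sum.inl _ => False
    | Sum.inr u, Sum.inr w => H.Adj u w
  symm := by
    constructor
    rintro (u | u) (w | w) h
    · exact h.symm
    · exact h
    · exact h
    · exact h.symm
  loopless := by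
    constructor
    rintro (u | u) h
    · exact G.loopless.irrefl u h
    · exact H.loopless.irrefl u h

/-- `k` disjoint copies of the graph `H`. -/
def copies (k : ℕ) {W : Type*} (H : SimpleGraph W) : SimpleGraph (Fin k × W) where
  Adj x y := x.1 = y.1 ∧ H.Adj x.2 y.2
  symm := by constructor; rintro x y ⟨h1, h2⟩; exact ⟨h1.symm, h2.symm⟩
  loopless := by constructor; rintro x ⟨h1, h2⟩; exact H.loopless.irrefl _ h2

/-- `K_b^e`: the complete graph `K_b` with the edge between vertices `0` and
`1` removed and a pendant vertex attached to each of `0` and `1`. -/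
def kbE (b : ℕ) : SimpleGraph (Fin b ⊕ Fin 2) where
  Adj x y :=
    match x, y with
    | Sum.inl i, Sum.inl j =>
        i ≠ j ∧ ¬(((i : ℕ) = 0 ∧ (j : ℕ) = 1) ∨ ((i : ℕ) = 1 ∧ (j : ℕ) = 0))
    | Sum.inl i, Sum.inr p => (i : ℕ) = (p : ℕ)
    | Sum.inr p, Sum.inl i => (i : ℕ) = (p : ℕ)
    | Sum.inr _, Sum.inr _ => False
  symm := by
    constructor
    rintro (i | p) (j | q) h
    · exact ⟨h.1.symm, by tauto⟩
    · exact h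
    · exact h
    · exact h
  loopless := by
    constructor
    rintro (i | p) h
    · exact h.1 rfl
    · exact h

/-- The number of neighbours of `v` lying in the set `F`. -/
noncomputable def degIn {V : Type*} (G : SimpleGraph V) (F : Set V) (v : V) : ℕ :=
  (G.neighborSet v ∩ F).ncard

/-- `F` is a union of (vertex sets of) connected components of `G - S`. -/
def isComponentUnion {V : Type*} (G : SimpleGraph V) (S : Set V) (F : Set V) : Prop :=
  F ⊆ Sᶜ ∧ ∀ u v : ↥(Sᶜ : Set V), (G.induce Sᶜ).Reachable u v → (u : V) ∈ F → (v : V) ∈ F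

/-- A graph has the `(a,b)`-property if it is `K_{r,s}`-minor free for all
positive `r, s` with `r + s = b + 1` and `r ≤ ω = min {a, ⌊(b+1)/2⌋}`. -/
def abProperty (a b : ℕ) {V : Type*} (G : SimpleGraph V) : Prop :=
  ∀ r s : ℕ, 0 < r → 0 < s → r + s = b + 1 → r ≤ min a ((b + 1) / 2) →
    ¬ (completeBipartiteGraph (Fin r) (Fin s)).IsMinor G


/-!
On `b + 1` vertices a `K_{1,b}` minor is the same as a vertex of degree `b`, so `G⋆` maximises
`λ_α` among connected graphs of maximum degree at most `b - 1`. Testing with the Perron vector `x`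
of `G⋆`, two moves strictly increase `λ_α`: adding an edge, and rotating an edge `uz` to `uz'`
when `x z ≤ x z'`. Hence any two vertices of degree at most `b - 2` are adjacent, and no rotation
onto a vertex of degree at most `b - 2` keeps the graph connected. This forces `d(v⋆) = b - 1`, so `W = {w}`. A vertex
`v ∈ U` with `d_U(v) ≤ b - 3` is then adjacent to `w`; if even `d_U(v) ≤ b - 4`, it has a
non-neighbour `u ∈ U` adjacent to every vertex except `v`, comparing the eigen-equations at `u`
and `v⋆` gives `x w ≤ x v`, and rotating `uw` to `uv` contradicts extremality.
-/

open Matrix SimpleGraph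
open scoped MatrixOrder

theorem Matrix.IsHermitian.lt_sSup_spectrum_of_le_dotProduct_mulVec {n : Type*} [Fintype n]
    [DecidableEq n] {B : Matrix n n ℝ} (hB : B.IsHermitian) {x : n → ℝ} {μ : ℝ}
    (hQ : μ * (x ⬝ᵥ x) ≤ x ⬝ᵥ B *ᵥ x) (hne : B *ᵥ x ≠ μ • x) :
    μ < sSup (spectrum ℝ B) := by
  set L := sSup (spectrum ℝ B)
  have hpsd : (algebraMap ℝ _ L - B).PosSemidef := Matrix.le_iff.mp <|
    le_algebraMap_of_spectrum_le (fun _ hr => le_csSup (finite_spectrum B).bddAbove hr) hB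
  have hMx : (algebraMap ℝ _ L - B) *ᵥ x = L • x - B *ᵥ x := by
    rw [sub_mulVec, Algebra.algebraMap_eq_smul_one, smul_mulVec, one_mulVec]
  have hxx : 0 ≤ x ⬝ᵥ x := by simpa using dotProduct_star_self_nonneg x
  by_contra! hL
  -- `x` attains the top of the Rayleigh quotient of `B`, so it is an eigenvector for `L`.
  have hBx : B *ᵥ x = L • x := by
    have hnonneg := hpsd.dotProduct_mulVec_nonneg x
    simp only [star_trivial, hMx, dotProduct_sub, dotProduct_smul, smul_eq_mul] at hnonneg
    have h0 : star x ⬝ᵥ (algebraMap ℝ _ L - B) *ᵥ x = 0 := by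
      rw [star_trivial, hMx, dotProduct_sub, dotProduct_smul, smul_eq_mul]
      nlinarith
    rw [hpsd.dotProduct_mulVec_zero_iff, hMx, sub_eq_zero] at h0
    exact h0.symm
  have hx : x ≠ 0 := by rintro rfl; simp at hne
  have hxx' : 0 < x ⬝ᵥ x := lt_of_le_of_ne hxx (Ne.symm (dotProduct_self_eq_zero.not.mpr hx))
  rw [hBx, dotProduct_smul, smul_eq_mul] at hQ
  exact hne (by rw [hBx, le_antisymm hL (le_of_mul_le_mul_right hQ hxx')])

namespace SimpleGraph

variable {V : Type*}

theorem neighborSet_edge {a c : V} (hac : a ≠ c) (p : V) :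
    (edge a c).neighborSet p = if p = a then {c} else if p = c then {a} else ∅ := by
  ext w
  simp only [mem_neighborSet, edge_adj]
  split_ifs <;> simp only [Set.mem_singleton_iff, Set.mem_empty_iff_false] <;> grind

theorem degree_eq_ncard (G : SimpleGraph V) (v : V) [Fintype (G.neighborSet v)] :
    G.degree v = (G.neighborSet v).ncard := by
  rw [Set.ncard_eq_toFinset_card', ← card_neighborSet_eq_degree, Set.toFinset_card]

theorem degree_edge {a c : V} (hac : a ≠ c) (p : V) [Fintype ((edge a c).neighborSet p)] :
    (edge a c).degree p = if p = a ∨ p = c then 1 else 0 := by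
  rw [degree_eq_ncard, neighborSet_edge hac]
  split_ifs <;> simp_all

theorem degree_sup_of_disjoint {G H : SimpleGraph V} (h : Disjoint G H) (v : V)
    [Fintype ((G ⊔ H).neighborSet v)] [Fintype (G.neighborSet v)] [Fintype (H.neighborSet v)] :
    (G ⊔ H).degree v = G.degree v + H.degree v := by
  rw [degree_eq_ncard, degree_eq_ncard, degree_eq_ncard, neighborSet_sup,
    Set.ncard_union_eq (disjoint_neighborSet.mpr h v)]

theorem Connected.sdiff_edge_sup_edge {G : SimpleGraph V} (hG : G.Connected) {u z z' : V}
    (h : (G \ edge u z).Reachable z z') : (G \ edge u z ⊔ edge u z').Connected := by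
  set H := G \ edge u z ⊔ edge u z'
  have hle : G \ edge u z ≤ H := le_sup_left
  have huz : H.Reachable u z := by
    refine Reachable.trans ?_ (h.mono hle).symm
    rcases eq_or_ne u z' with rfl | hne
    · rfl
    · exact Adj.reachable (le_sup_right (a := G \ edge u z) (by simp [edge_adj, hne]))
  have hadj : ∀ a c, G.Adj a c → H.Reachable a c := fun a c hac => by
    by_cases he : (edge u z).Adj a c
    · obtain ⟨⟨rfl, rfl⟩ | ⟨rfl, rfl⟩, -⟩ := (edge_adj _ _ _ _).mp he
      exacts [huz, huz.symm]
    · exact Adj.reachable (hle ⟨hac, he⟩)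
  have hwalk : ∀ a c, G.Walk a c → H.Reachable a c := fun a c p => by
    induction p with
    | nil => rfl
    | cons hac _ ih => exact (hadj _ _ hac).trans ih
  have := hG.nonempty
  exact ⟨fun a c => hwalk a c (hG.preconnected a c).some⟩

theorem completeBipartiteGraph_one_isMinor_of_le_degree {G : SimpleGraph V} {b : ℕ} {v : V}
    [Fintype (G.neighborSet v)] (h : b ≤ G.degree v) :
    (completeBipartiteGraph (Fin 1) (Fin b)).IsMinor G := by
  obtain ⟨s, hs, hcard⟩ := Finset.exists_subset_card_eq h
  let e : Fin b ≃ s := (s.equivFinOfCardEq hcard).symm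
  have hadj : ∀ i, G.Adj v (e i) := fun i => (mem_neighborFinset _ _ _).mp (hs (e i).2)
  refine ⟨Sum.elim (fun _ => {v}) (fun i => {(e i : V)}), ?_, ?_, ?_, ?_⟩
  · rintro (_ | _) <;> exact Set.singleton_nonempty _
  · rintro (_ | i)
    exacts [(Connected.of_subsingleton : (G.induce {v}).Connected),
      (Connected.of_subsingleton : (G.induce {(e i : V)}).Connected)]
  · rintro (i | i) (j | j) hij
    · exact absurd (congrArg Sum.inl (Subsingleton.elim i j)) hij
    · exact Set.disjoint_singleton.mpr (hadj j).ne
    · exact Set.disjoint_singleton.mpr (hadj i).ne'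
    · exact Set.disjoint_singleton.mpr fun h =>
        hij (congrArg Sum.inr (e.injective (Subtype.ext h)))
  · rintro (_ | i) (_ | j) hij <;> simp only [completeBipartiteGraph_adj, Sum.isLeft_inl,
      Sum.isRight_inl, Sum.isLeft_inr, Sum.isRight_inr] at hij <;> simp at hij
    · exact ⟨v, rfl, e j, rfl, hadj j⟩
    · exact ⟨e i, rfl, v, rfl, (hadj i).symm⟩

variable [Fintype V]

theorem exists_le_degree_of_completeBipartiteGraph_one_isMinor {G : SimpleGraph V} {b : ℕ}
    (hV : Fintype.card V ≤ b + 1) (h : (completeBipartiteGraph (Fin 1) (Fin b)).IsMinor G) :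
    ∃ v, b ≤ G.degree v := by
  obtain ⟨f, hne, -, hdisj, hadj⟩ := h
  choose g hg using hne
  have hinj : Function.Injective g := fun w₁ w₂ h => by
    by_contra hw
    exact Set.disjoint_left.mp (hdisj _ _ hw) (hg w₁) (h ▸ hg w₂)
  -- `b + 1` disjoint nonempty branch sets in `b + 1` vertices must be singletons.
  have hsurj : Function.Surjective g := ((Fintype.bijective_iff_injective_and_card g).mpr
    ⟨hinj, le_antisymm (Fintype.card_le_of_injective g hinj) (by simpa [add_comm] using hV)⟩).2
  have hsingle : ∀ w, ∀ p ∈ f w, p = g w := fun w p hp => by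
    obtain ⟨w', rfl⟩ := hsurj p
    by_contra hw
    exact Set.disjoint_left.mp (hdisj w' w fun h => hw (h ▸ rfl)) (hg w') hp
  refine ⟨g (Sum.inl 0), ?_⟩
  calc b = (Finset.univ : Finset (Fin b)).card := by simp
    _ ≤ (G.neighborFinset (g (Sum.inl 0))).card := by
        refine Finset.card_le_card_of_injOn (fun i => g (Sum.inr i)) (fun i _ => ?_)
          fun i _ j _ hij => by simpa using hinj hij
        obtain ⟨v₁, h₁, v₂, h₂, hv⟩ := hadj (Sum.inl 0) (Sum.inr i) (by simp)
        rw [hsingle _ _ h₁, hsingle _ _ h₂] at hv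
        simpa using hv
    _ = G.degree (g (Sum.inl 0)) := card_neighborFinset_eq_degree _ _

theorem kabMinorFree_one_iff_forall_degree_lt {G : SimpleGraph V} {b : ℕ}
    (hV : Fintype.card V ≤ b + 1) : kabMinorFree 1 b G ↔ ∀ v, G.degree v < b :=
  ⟨fun h v => lt_of_not_ge fun (hv : b ≤ G.degree v) =>
      h (completeBipartiteGraph_one_isMinor_of_le_degree hv),
    fun h hm => let ⟨v, hv⟩ := exists_le_degree_of_completeBipartiteGraph_one_isMinor hV hm
      (h v).not_ge hv⟩

theorem exists_ne_not_adj_of_degree_add_one_lt {G : SimpleGraph V} {v : V}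
    (h : G.degree v + 1 < Fintype.card V) : ∃ w, w ≠ v ∧ ¬G.Adj v w := by
  by_contra! hall
  have hsub : Finset.univ.erase v ⊆ G.neighborFinset v := fun w hw =>
    (mem_neighborFinset _ _ _).mpr (hall w (Finset.ne_of_mem_erase hw))
  have := Finset.card_le_card hsub
  rw [Finset.card_erase_of_mem (Finset.mem_univ v), Finset.card_univ,
    card_neighborFinset_eq_degree] at this
  omega

variable [DecidableEq V]

theorem degree_add_card_le {G : SimpleGraph V} {w : V} {s : Finset V}
    (h : ∀ a ∈ s, ¬G.Adj w a) : G.degree w + s.card ≤ Fintype.card V := by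
  have hsub : G.neighborFinset w ⊆ sᶜ := fun a ha =>
    Finset.mem_compl.mpr fun hs => h a hs ((mem_neighborFinset _ _ _).mp ha)
  have := Finset.card_le_card hsub
  rw [Finset.card_compl, card_neighborFinset_eq_degree] at this
  have := s.card_le_univ
  omega

theorem neighborFinset_eq_compl_pair {G : SimpleGraph V} {p q : V}
    (hdeg : G.degree p + 2 = Fintype.card V) (hpq : p ≠ q) (hn : ¬G.Adj p q) :
    G.neighborFinset p = {p, q}ᶜ := by
  refine Finset.eq_of_subset_of_card_le (fun a ha => ?_) ?_
  · rw [mem_neighborFinset] at ha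
    simp only [Finset.mem_compl, Finset.mem_insert, Finset.mem_singleton, not_or]
    exact ⟨ha.ne', fun h => hn (h ▸ ha)⟩
  · rw [Finset.card_compl, Finset.card_pair hpq, card_neighborFinset_eq_degree]
    omega

theorem compl_neighborSet_union_singleton {G : SimpleGraph V} {c w : V}
    (hc : G.neighborFinset c = {c, w}ᶜ) (hcw : c ≠ w) : (G.neighborSet c ∪ {c})ᶜ = {w} := by
  rw [← coe_neighborFinset, hc]
  ext y
  simp only [Set.mem_compl_iff, Set.mem_union, Finset.coe_compl, Finset.coe_pair,
    Set.mem_insert_iff, Set.mem_singleton_iff]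
  constructor
  · tauto
  · rintro rfl
    tauto

end SimpleGraph

section DegIn

variable {V : Type*} (G : SimpleGraph V)

theorem degIn_add_degIn_compl [Fintype V] (S : Set V) (v : V) :
    degIn G S v + degIn G Sᶜ v = G.degree v := by
  rw [degIn, degIn, degree_eq_ncard, ← Set.sdiff_eq, Set.ncard_inter_add_ncard_sdiff_eq_ncard]

theorem degIn_neighborSet_add_one_le [Finite V] {c v : V} (hv : G.Adj c v)
    [Fintype (G.neighborSet c)] : degIn G (G.neighborSet c) v + 1 ≤ G.degree c := by
  rw [degree_eq_ncard, ← Set.ncard_sdiff_singleton_add_one (s := G.neighborSet c) hv]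
  have hsub : G.neighborSet v ∩ G.neighborSet c ⊆ G.neighborSet c \ {v} :=
    fun _ ⟨hw, hS⟩ => ⟨hS, (G.ne_of_adj hw).symm⟩
  exact Nat.add_le_add_right (Set.ncard_le_ncard hsub) 1

theorem exists_adj_ne_not_adj_of_degIn_neighborSet_add_one_lt [Finite V] {c v : V}
    [Fintype (G.neighborSet c)] (h : degIn G (G.neighborSet c) v + 1 < G.degree c) :
    ∃ u, G.Adj c u ∧ u ≠ v ∧ ¬G.Adj v u := by
  by_contra! hall
  have hle : (G.neighborSet c \ {v}).ncard ≤ degIn G (G.neighborSet c) v :=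
    Set.ncard_le_ncard fun u ⟨hu, hne⟩ => ⟨hall u hu hne, hu⟩
  have := Set.pred_ncard_le_ncard_sdiff_singleton (G.neighborSet c) v
  rw [degree_eq_ncard] at h
  omega

theorem degIn_singleton (v w : V) : degIn G {w} v = if G.Adj v w then 1 else 0 := by
  rw [degIn]
  split_ifs with h
  · have hw : w ∈ G.neighborSet v := h
    rw [Set.inter_eq_right.mpr (Set.singleton_subset_iff.mpr hw), Set.ncard_singleton]
  · have hw : w ∉ G.neighborSet v := h
    rw [Set.inter_singleton_eq_empty.mpr hw, Set.ncard_empty]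

theorem degIn_insert_of_adj [Finite V] {S : Set V} {v a : V} (h : G.Adj v a) (ha : a ∉ S) :
    degIn G (insert a S) v = degIn G S v + 1 := by
  rw [degIn, degIn, Set.inter_insert_of_mem ((G.mem_neighborSet v a).mpr h),
    Set.ncard_insert_of_notMem fun h' => ha h'.2]

theorem degree_eq_degIn_add [Fintype V] [DecidableEq V] {c w v : V}
    (hc : G.neighborFinset c = {c, w}ᶜ) (hcw : c ≠ w) (hv : G.Adj c v) :
    G.degree v = degIn G (G.neighborSet c) v + degIn G {w} v + 1 := by
  have hU : G.neighborSet c = {c, w}ᶜ := by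
    rw [← coe_neighborFinset, hc, Finset.coe_compl, Finset.coe_pair]
  rw [← degIn_add_degIn_compl G (G.neighborSet c) v, hU, compl_compl,
    degIn_insert_of_adj G hv.symm (by simpa using hcw)]
  ring

end DegIn

section AlphaMatrix

variable {V : Type*} [Fintype V]

theorem aMatrix_apply (G : SimpleGraph V) (α : ℝ) (u w : V) :
    aMatrix G α u w =
      (if u = w then α * G.degree w else 0) + if G.Adj u w then 1 - α else 0 := by
  rw [aMatrix, Matrix.of_apply, degree_eq_sum_if_adj]

theorem aMatrix_isHermitian (G : SimpleGraph V) (α : ℝ) : (aMatrix G α).IsHermitian := by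
  ext u w
  by_cases h : u = w
  · subst h; rfl
  · simp [aMatrix_apply, h, Ne.symm h, G.adj_comm u w]

theorem aMatrix_sup_of_disjoint {G H : SimpleGraph V} (h : Disjoint G H) (α : ℝ) :
    aMatrix (G ⊔ H) α = aMatrix G α + aMatrix H α := by
  ext u w
  simp only [Matrix.add_apply, aMatrix_apply, degree_sup_of_disjoint h, Nat.cast_add]
  by_cases hG : G.Adj u w <;> by_cases hH : H.Adj u w
  · exact absurd hH (SimpleGraph.disjoint_left.mp h u w hG)
  all_goals split_ifs <;> simp_all <;> ring

theorem aMatrix_mulVec_apply (G : SimpleGraph V) (α : ℝ) (x : V → ℝ) (u : V) :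
    (aMatrix G α *ᵥ x) u = ∑ w, if G.Adj u w then α * x u + (1 - α) * x w else 0 := by
  simp only [mulVec, dotProduct, aMatrix_apply, add_mul, Finset.sum_add_distrib, ite_mul,
    zero_mul, Finset.sum_ite_eq, Finset.mem_univ, if_true]
  rw [degree_eq_sum_if_adj (R := ℝ), Finset.mul_sum, Finset.sum_mul, ← Finset.sum_add_distrib]
  refine Finset.sum_congr rfl fun w _ => ?_
  split_ifs <;> ring

theorem aMatrix_mulVec_apply_nonneg (H : SimpleGraph V) {α : ℝ} (hα0 : 0 ≤ α) (hα1 : α < 1)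
    {x : V → ℝ} (hx : ∀ v, 0 < x v) (p : V) : 0 ≤ (aMatrix H α *ᵥ x) p := by
  rw [aMatrix_mulVec_apply]
  refine Finset.sum_nonneg fun w _ => ?_
  split_ifs
  · nlinarith [hx p, hx w]
  · exact le_rfl

theorem aMatrix_mulVec_apply_pos {H : SimpleGraph V} {α : ℝ} (hα0 : 0 ≤ α) (hα1 : α < 1)
    {x : V → ℝ} (hx : ∀ v, 0 < x v) {p q : V} (hpq : H.Adj p q) :
    0 < (aMatrix H α *ᵥ x) p := by
  rw [aMatrix_mulVec_apply]
  refine Finset.sum_pos' (fun w _ => ?_) ⟨q, Finset.mem_univ q, by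
    rw [if_pos hpq]; nlinarith [hx p, hx q]⟩
  split_ifs
  · nlinarith [hx p, hx w]
  · exact le_rfl

theorem aMatrix_edge_mulVec_apply {a c : V} (hac : a ≠ c) (α : ℝ) (x : V → ℝ) (p : V) :
    (aMatrix (edge a c) α *ᵥ x) p =
      if p = a then α * x a + (1 - α) * x c
      else if p = c then α * x c + (1 - α) * x a else 0 := by
  rw [aMatrix_mulVec_apply]
  split_ifs with hpa hpc
  · subst hpa
    rw [Finset.sum_eq_single c (fun w _ hw => by simp [edge_adj, hw, hac])
      (by simp), if_pos (by simp [edge_adj, hac])]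
  · subst hpc
    rw [Finset.sum_eq_single a (fun w _ hw => by simp [edge_adj, hw, hpa])
      (by simp), if_pos (by simp [edge_adj, hpa])]
  · exact Finset.sum_eq_zero fun w _ => by simp [edge_adj, hpa, hpc]

theorem dotProduct_aMatrix_edge_mulVec {a c : V} (hac : a ≠ c) (α : ℝ) (x : V → ℝ) :
    x ⬝ᵥ aMatrix (edge a c) α *ᵥ x =
      x a * (α * x a + (1 - α) * x c) + x c * (α * x c + (1 - α) * x a) := by
  rw [dotProduct, Fintype.sum_eq_add a c hac fun p ⟨hpa, hpc⟩ => by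
    simp [aMatrix_edge_mulVec_apply hac, hpa, hpc]]
  simp [aMatrix_edge_mulVec_apply hac, hac.symm]

theorem aMatrix_mulVec_apply_of_neighborFinset_eq {G : SimpleGraph V} {p : V} {s : Finset V}
    (h : G.neighborFinset p = s) (α : ℝ) (x : V → ℝ) :
    (aMatrix G α *ᵥ x) p = α * s.card * x p + (1 - α) * ∑ w ∈ s, x w := by
  calc (aMatrix G α *ᵥ x) p
        = ∑ w ∈ Finset.univ.filter (G.Adj p), (α * x p + (1 - α) * x w) := by
        rw [aMatrix_mulVec_apply, Finset.sum_filter]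
    _ = ∑ w ∈ s, (α * x p + (1 - α) * x w) := by
        rw [← h]; congr 1; ext w; simp
    _ = α * s.card * x p + (1 - α) * ∑ w ∈ s, x w := by
        rw [Finset.sum_add_distrib, Finset.sum_const, nsmul_eq_mul, Finset.mul_sum]; ring

variable [DecidableEq V]

theorem lt_lambdaAlpha_of_dotProduct_le {G G' : SimpleGraph V} {α μ : ℝ} {x : V → ℝ}
    (heig : aMatrix G α *ᵥ x = μ • x)
    (hQ : x ⬝ᵥ aMatrix G α *ᵥ x ≤ x ⬝ᵥ aMatrix G' α *ᵥ x)
    {p : V} (hp : (aMatrix G α *ᵥ x) p < (aMatrix G' α *ᵥ x) p) : μ < lambdaAlpha G' α := by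
  refine (aMatrix_isHermitian G' α).lt_sSup_spectrum_of_le_dotProduct_mulVec (x := x) ?_
    fun h => ?_
  · rwa [heig, dotProduct_smul, smul_eq_mul] at hQ
  · rw [h, ← heig] at hp
    exact lt_irrefl _ hp

theorem lt_lambdaAlpha_sup_edge {G : SimpleGraph V} {α μ : ℝ} (hα0 : 0 ≤ α) (hα1 : α < 1)
    {x : V → ℝ} (hx : ∀ v, 0 < x v) (heig : aMatrix G α *ᵥ x = μ • x)
    {a c : V} (hac : a ≠ c) (hn : ¬G.Adj a c) : μ < lambdaAlpha (G ⊔ edge a c) α := by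
  have hA := aMatrix_sup_of_disjoint (G.disjoint_edge.mpr hn) α
  refine lt_lambdaAlpha_of_dotProduct_le heig (p := a) ?_ ?_
  · rw [hA, add_mulVec, dotProduct_add, le_add_iff_nonneg_right]
    exact dotProduct_nonneg_of_nonneg (fun v => (hx v).le)
      (aMatrix_mulVec_apply_nonneg _ hα0 hα1 hx)
  · rw [hA, add_mulVec, Pi.add_apply, lt_add_iff_pos_right]
    exact aMatrix_mulVec_apply_pos hα0 hα1 hx (q := c) (by simp [edge_adj, hac])

theorem lt_lambdaAlpha_sdiff_edge_sup_edge {G : SimpleGraph V} {α μ : ℝ} (hα0 : 0 ≤ α)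
    (hα1 : α < 1) {x : V → ℝ} (hx : ∀ v, 0 < x v) (heig : aMatrix G α *ᵥ x = μ • x)
    {u z z' : V} (huz : G.Adj u z) (hn : ¬G.Adj u z') (huz' : u ≠ z') (hxz : x z ≤ x z') :
    μ < lambdaAlpha (G \ edge u z ⊔ edge u z') α := by
  have hzz' : z ≠ z' := by rintro rfl; exact hn huz
  have hG : aMatrix G α = aMatrix (G \ edge u z) α + aMatrix (edge u z) α := by
    rw [← aMatrix_sup_of_disjoint disjoint_sdiff_self_left,
      sdiff_sup_cancel ((edge_le_iff G).mpr (Or.inr huz))]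
  have hG' := aMatrix_sup_of_disjoint
    ((G \ edge u z).disjoint_edge.mpr fun h => hn (sdiff_le (a := G) h)) α
  refine lt_lambdaAlpha_of_dotProduct_le heig (p := z') ?_ ?_
  · rw [hG, hG', add_mulVec, add_mulVec, dotProduct_add, dotProduct_add, add_le_add_iff_left,
      dotProduct_aMatrix_edge_mulVec huz.ne, dotProduct_aMatrix_edge_mulVec huz']
    have h1 : 0 ≤ α * ((x z' - x z) * (x z' + x z)) :=
      mul_nonneg hα0 (mul_nonneg (sub_nonneg.2 hxz) (by linarith [hx z, hx z']))
    have h2 : 0 ≤ (1 - α) * (x u * (x z' - x z)) :=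
      mul_nonneg (by linarith) (mul_nonneg (hx u).le (sub_nonneg.2 hxz))
    nlinarith [h1, h2]
  · rw [hG, hG', add_mulVec, add_mulVec, Pi.add_apply, Pi.add_apply, add_lt_add_iff_left,
      aMatrix_edge_mulVec_apply huz.ne, if_neg (Ne.symm huz'), if_neg (Ne.symm hzz')]
    exact aMatrix_mulVec_apply_pos hα0 hα1 hx (q := u) (by simp [edge_adj, huz', Ne.symm huz'])

/-- Subtracting the eigen-equations at `m` and `u` gives
`(μ - α (|V| - 2) + 1 - α) (x m - x u) = (1 - α) (x v - x w)`, and the equation at `m` alone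
gives `μ ≥ α (|V| - 2)`. -/
theorem le_of_neighborFinset_eq_compl_pair {G : SimpleGraph V} {α μ : ℝ} (hα1 : α < 1)
    {x : V → ℝ} (hx : ∀ v, 0 < x v) (heig : aMatrix G α *ᵥ x = μ • x) {u v m w : V}
    (hm : ∀ y, x y ≤ x m) (huv : u ≠ v) (hmw : m ≠ w) (hu : G.neighborFinset u = {u, v}ᶜ)
    (hm' : G.neighborFinset m = {m, w}ᶜ) : x w ≤ x v := by
  have eu := congrFun heig u
  have em := congrFun heig m
  rw [aMatrix_mulVec_apply_of_neighborFinset_eq hu, Pi.smul_apply, smul_eq_mul] at eu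
  rw [aMatrix_mulVec_apply_of_neighborFinset_eq hm', Pi.smul_apply, smul_eq_mul] at em
  have hsum : ∀ a c : V, a ≠ c →
      ∑ y ∈ ({a, c} : Finset V)ᶜ, x y = ∑ y, x y - x a - x c :=
    fun a c hac => by rw [← Finset.sum_compl_add_sum {a, c}, Finset.sum_pair hac]; ring
  have hcard : (({u, v} : Finset V)ᶜ.card : ℝ) = (({m, w} : Finset V)ᶜ.card : ℝ) := by
    rw [Finset.card_compl, Finset.card_compl, Finset.card_pair huv, Finset.card_pair hmw]
  have hT : 0 ≤ ∑ y ∈ ({m, w} : Finset V)ᶜ, x y := Finset.sum_nonneg fun y _ => (hx y).le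
  set c : ℝ := (({m, w} : Finset V)ᶜ.card : ℝ)
  rw [hcard, hsum u v huv] at eu
  have hcoef : 0 ≤ μ - α * c :=
    le_of_mul_le_mul_right (by nlinarith : 0 * x m ≤ (μ - α * c) * x m) (hx m)
  rw [hsum m w hmw] at em
  have key : (μ - α * c + (1 - α)) * (x m - x u) = (1 - α) * (x v - x w) := by
    linear_combination eu - em
  have := mul_nonneg (by linarith : 0 ≤ μ - α * c + (1 - α)) (sub_nonneg.2 (hm u))
  rw [key] at this
  linarith [(mul_nonneg_iff_of_pos_left (by linarith : (0 : ℝ) < 1 - α)).mp this]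

end AlphaMatrix

section Extremal

variable {V : Type*} [Fintype V] [DecidableEq V]

structure IsSpectralExtremal (G : SimpleGraph V) (α : ℝ) (b : ℕ) (x : V → ℝ) : Prop where
  alpha_nonneg : 0 ≤ α
  alpha_lt_one : α < 1
  connected : G.Connected
  degree_lt : ∀ v, G.degree v < b
  lambdaAlpha_le : ∀ H : SimpleGraph V, H.Connected → (∀ v, H.degree v < b) →
    lambdaAlpha H α ≤ lambdaAlpha G α
  pos : ∀ v, 0 < x v
  mulVec_eq : aMatrix G α *ᵥ x = lambdaAlpha G α • x

namespace IsSpectralExtremal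

variable {G : SimpleGraph V} {α : ℝ} {b : ℕ} {x : V → ℝ}

theorem adj_of_degree_add_one_lt (hG : IsSpectralExtremal G α b x) {a c : V} (hac : a ≠ c)
    (ha : G.degree a + 1 < b) (hc : G.degree c + 1 < b) : G.Adj a c := by
  by_contra hn
  refine (hG.lambdaAlpha_le _ (hG.connected.mono le_sup_left) fun p => ?_).not_gt
    (lt_lambdaAlpha_sup_edge hG.alpha_nonneg hG.alpha_lt_one hG.pos hG.mulVec_eq hac hn)
  rw [degree_sup_of_disjoint (G.disjoint_edge.mpr hn), degree_edge hac]
  have := hG.degree_lt p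
  split_ifs with hp
  · rcases hp with rfl | rfl <;> omega
  · omega

theorem not_reachable_sdiff_edge (hG : IsSpectralExtremal G α b x) {u z z' : V}
    (huz : G.Adj u z) (hn : ¬G.Adj u z') (huz' : u ≠ z') (hxz : x z ≤ x z')
    (hz' : G.degree z' + 1 < b) : ¬(G \ edge u z).Reachable z z' := by
  intro hr
  have hzz' : z ≠ z' := by rintro rfl; exact hn huz
  have hsplit : ∀ p, G.degree p = (G \ edge u z).degree p + (edge u z).degree p := fun p => by
    conv_lhs => rw [← sdiff_sup_cancel ((edge_le_iff G).mpr (Or.inr huz))]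
    simp only [degree_sup_of_disjoint disjoint_sdiff_self_left]
  refine (hG.lambdaAlpha_le _ (hG.connected.sdiff_edge_sup_edge hr) fun p => ?_).not_gt
    (lt_lambdaAlpha_sdiff_edge_sup_edge hG.alpha_nonneg hG.alpha_lt_one hG.pos hG.mulVec_eq
      huz hn huz' hxz)
  simp only [degree_sup_of_disjoint
    ((G \ edge u z).disjoint_edge.mpr fun h => hn (sdiff_le (a := G) h))]
  have h := hsplit p
  have := hG.degree_lt p
  by_cases hp : p = z'
  · subst hp
    rw [degree_edge huz.ne, if_neg (by tauto)] at h
    rw [degree_edge huz', if_pos (Or.inr rfl)]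
    omega
  · have hle : (edge u z').degree p ≤ (edge u z).degree p := by
      rw [degree_edge huz', degree_edge huz.ne]
      split_ifs <;> simp_all
    omega

theorem degree_add_one_eq_of_forall_le (hG : IsSpectralExtremal G α b x)
    (hV : Fintype.card V = b + 1) {c : V} (hc : ∀ y, x y ≤ x c) : G.degree c + 1 = b := by
  have hlt := hG.degree_lt c
  by_contra hne
  have hc' : G.degree c + 1 < b := by omega
  obtain ⟨u, huc, hcu⟩ := exists_ne_not_adj_of_degree_add_one_lt (G := G) (v := c) (by omega)
  have hu : G.degree u + 2 = Fintype.card V := by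
    by_contra h
    exact hcu (hG.adj_of_degree_add_one_lt huc.symm hc' (by have := hG.degree_lt u; omega))
  have hNu := neighborFinset_eq_compl_pair hu huc fun h => hcu h.symm
  obtain ⟨z, hz⟩ := (hG.connected.preconnected c u).nonempty_neighborSet_left huc.symm
  have hzc : z ≠ c := (G.ne_of_adj hz).symm
  have hzu : z ≠ u := by rintro rfl; exact hcu hz
  have huz : G.Adj u z := by
    rw [← mem_neighborFinset, hNu]
    simp [hzu, hzc]
  -- Moving the edge `uz` to `uc` keeps `G` connected through the edge `zc`.
  refine hG.not_reachable_sdiff_edge huz (fun h => hcu h.symm) huc (hc z) hc' (Adj.reachable ?_)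
  simp [sdiff_adj, edge_adj, (hz : G.Adj c z).symm, huc.symm, hzc, hzu]

theorem adj_of_degIn_add_three_le (hG : IsSpectralExtremal G α b x)
    (hV : Fintype.card V = b + 1) {c w v : V} (hc : G.neighborFinset c = {c, w}ᶜ) (hcw : c ≠ w)
    (hv : G.Adj c v) (hdeg : degIn G (G.neighborSet c) v + 3 ≤ b) : G.Adj v w := by
  have hcn : ¬G.Adj c w := fun h => by simpa [hc] using (G.mem_neighborFinset c w).mpr h
  have hvw : v ≠ w := by rintro rfl; exact hcn hv
  by_contra hn
  have hdv := degree_eq_degIn_add G hc hcw hv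
  rw [degIn_singleton, if_neg hn] at hdv
  have hdw := degree_add_card_le (G := G) (w := w) (s := {w, c, v}) (by
    simp only [Finset.mem_insert, Finset.mem_singleton]
    rintro a (rfl | rfl | rfl)
    exacts [G.loopless.irrefl a, fun h => hcn h.symm, fun h => hn h.symm])
  rw [Finset.card_insert_of_notMem (by simp [hcw.symm, hvw.symm]), Finset.card_pair hv.ne] at hdw
  exact hn (hG.adj_of_degree_add_one_lt hvw (by omega) (by omega))

theorem degIn_add_three_eq (hG : IsSpectralExtremal G α b x) (hV : Fintype.card V = b + 1)
    {c w v : V} (hmax : ∀ y, x y ≤ x c) (hc : G.neighborFinset c = {c, w}ᶜ) (hcw : c ≠ w)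
    (hv : G.Adj c v) (hdeg : degIn G (G.neighborSet c) v + 3 ≤ b) :
    degIn G (G.neighborSet c) v + 3 = b := by
  have hcn : ∀ y, G.Adj c y ↔ y ≠ c ∧ y ≠ w := fun y => by
    rw [← mem_neighborFinset, hc]
    simp
  have hvw := hG.adj_of_degIn_add_three_le hV hc hcw hv hdeg
  have hdv := degree_eq_degIn_add G hc hcw hv
  rw [degIn_singleton, if_pos hvw] at hdv
  have hdc : G.degree c + 2 = Fintype.card V := by
    rw [← card_neighborFinset_eq_degree, hc, Finset.card_compl, Finset.card_pair hcw]
    have := Finset.card_le_univ ({c, w} : Finset V)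
    rw [Finset.card_pair hcw] at this
    omega
  by_contra hne
  obtain ⟨u, hu, huv, hvu⟩ :=
    exists_adj_ne_not_adj_of_degIn_neighborSet_add_one_lt G (v := v) (c := c) (by omega)
  have hud : G.degree u + 2 = Fintype.card V := by
    by_contra h
    exact hvu (hG.adj_of_degree_add_one_lt huv.symm (by omega) (by have := hG.degree_lt u; omega))
  have hNu := neighborFinset_eq_compl_pair hud huv fun h => hvu h.symm
  have huw : G.Adj u w := by
    rw [← mem_neighborFinset, hNu]
    simp only [Finset.mem_compl, Finset.mem_insert, Finset.mem_singleton, not_or]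
    exact ⟨fun h => ((hcn u).mp hu).2 h.symm, fun h => ((hcn v).mp hv).2 h.symm⟩
  have hxw := le_of_neighborFinset_eq_compl_pair hG.alpha_lt_one hG.pos hG.mulVec_eq hmax huv
    hcw hNu hc
  -- Moving the edge `uw` to `uv` keeps `G` connected through the edge `wv`.
  refine hG.not_reachable_sdiff_edge huw (fun h => hvu h.symm) huv hxw (by omega)
    (Adj.reachable ?_)
  simp [sdiff_adj, edge_adj, hvw.symm, huv.symm, ((hcn u).mp hu).2.symm]

end IsSpectralExtremal

end Extremal

theorem extremal_K1b_U2_degrees_n_eq_b_add_one_general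
    (n b : ℕ) (hnb : n = b + 1)
    (α : ℝ) (hα0 : 0 ≤ α) (hα1 : α < 1)
    (G : SimpleGraph (Fin n)) (hconn : G.Connected) (hfree : kabMinorFree 1 b G)
    (hmax : ∀ H : SimpleGraph (Fin n), H.Connected → kabMinorFree 1 b H →
      lambdaAlpha H α ≤ lambdaAlpha G α)
    (x : Fin n → ℝ) (hx : ∀ v, 0 < x v)
    (heig : (aMatrix G α).mulVec x = lambdaAlpha G α • x)
    (vstar : Fin n) (hvstar : ∀ u, x u ≤ x vstar) :
    ∀ v ∈ G.neighborSet vstar, degIn G (G.neighborSet vstar) v ≠ b - 2 →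
      degIn G ((G.neighborSet vstar ∪ {vstar})ᶜ) v = 1 ∧
      degIn G (G.neighborSet vstar) v = b - 3 := by
  subst hnb
  have hV : Fintype.card (Fin (b + 1)) = b + 1 := Fintype.card_fin _
  have hfree_iff := fun H => kabMinorFree_one_iff_forall_degree_lt (G := H) hV.le
  have hG : IsSpectralExtremal G α b x :=
    ⟨hα0, hα1, hconn, (hfree_iff G).mp hfree,
      fun H hH hdeg => hmax H hH ((hfree_iff H).mpr hdeg), hx, heig⟩
  have hdeg := hG.degree_add_one_eq_of_forall_le hV hvstar
  obtain ⟨w, hw, hn⟩ := exists_ne_not_adj_of_degree_add_one_lt (G := G) (v := vstar) (by omega)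
  have hc := neighborFinset_eq_compl_pair (by omega) hw.symm hn
  intro v hv hne
  have hlt : degIn G (G.neighborSet vstar) v + 3 ≤ b := by
    have := degIn_neighborSet_add_one_le G hv
    omega
  rw [compl_neighborSet_union_singleton hc hw.symm, degIn_singleton,
    if_pos (hG.adj_of_degIn_add_three_le hV hc hw.symm hv hlt)]
  exact ⟨rfl, by have := hG.degIn_add_three_eq hV hvstar hc hw.symm hv hlt; omega⟩

/-- For `n = b + 1`: in an `A_α`-extremal connected `K_{1,b}`-minor free
graph, every vertex of `U₂` has exactly one neighbour in `W` and exactly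
`b - 3` neighbours in `U`. -/
theorem extremal_K1b_U2_degrees_n_eq_b_add_one
    (n b : ℕ) (hb : 3 ≤ b) (hnb : n = b + 1)
    (α : ℝ) (hα0 : 0 ≤ α) (hα1 : α < 1)
    (G : SimpleGraph (Fin n)) (hconn : G.Connected) (hfree : kabMinorFree 1 b G)
    (hmax : ∀ H : SimpleGraph (Fin n), H.Connected → kabMinorFree 1 b H →
      lambdaAlpha H α ≤ lambdaAlpha G α)
    (x : Fin n → ℝ) (hx : ∀ v, 0 < x v)
    (heig : (aMatrix G α).mulVec x = lambdaAlpha G α • x)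
    (vstar : Fin n) (hvstar : ∀ u, x u ≤ x vstar) :
    ∀ v ∈ G.neighborSet vstar, degIn G (G.neighborSet vstar) v ≠ b - 2 →
      degIn G ((G.neighborSet vstar ∪ {vstar})ᶜ) v = 1 ∧
      degIn G (G.neighborSet vstar) v = b - 3 :=
  extremal_K1b_U2_degrees_n_eq_b_add_one_general n b hnb α hα0 hα1 G hconn hfree hmax x hx heig
    vstar hvstar
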